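/- Let n, k, d be positive integers, ε > 0, and 0 < δ < 1/2. Let Σ = {1,…,d+1} ∪ {⊥}. For every deterministic owner O (for k rounds of (ε,δ)-concentrated functions {0,1}^n → ℝ^d) there exists a (k,n,Σ) block decision tree T_O such that: (1) for every w ∈ Σ^{<k}, Pr_{X uniform on {0,1}^n}[v_w(X) = ⊥] ≤ δ; and (2) for all X_1,…,X_k ∈ {0,1}^n, if no coordinate of T_O(X_1,…,X_k) ∈ Σ^k equals ⊥, then in the interaction O ↔ S₀(X_1,…,X_k) one has max_{1≤i≤k} ‖Y_i − μ_i‖_∞ ≤ (3d+5)ε. -/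

import Mathlib

open Classical

/-- Probability of `P` under the uniform distribution on a finite type. -/
noncomputable def pr {α : Type*} [Fintype α] (P : α → Prop) : ℝ :=
  ((Finset.univ.filter P).card : ℝ) / (Fintype.card α : ℝ)

/-- `f : {0,1}^n → ℝ^d` is `(ε,δ)`-concentrated at `μ`. -/
def Concentrated (n d : ℕ) (ε δ : ℝ)
    (f : (Fin n → Bool) → Fin d → ℝ) (μ : Fin d → ℝ) : Prop :=
  pr (fun X : Fin n → Bool => ∃ j, |f X j - μ j| > ε) ≤ δ

/-- A deterministic owner for `k` rounds of `(ε,δ)`-concentrated functions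
`{0,1}^n → ℝ^d`: given the history of responses `Y_1,…,Y_{i-1}`, it produces
a function `f_i` together with a point `μ_i` at which `f_i` is concentrated. -/
structure Owner (n k d : ℕ) (ε δ : ℝ) where
  act : List (Fin d → ℝ) → (((Fin n → Bool) → Fin d → ℝ) × (Fin d → ℝ))
  conc : ∀ ys : List (Fin d → ℝ), ys.length < k →
    Concentrated n d ε δ (act ys).1 (act ys).2

/-- A one-query steward with randomness complexity `m`: in each round it chooses
a query point from its randomness and the past query answers, and it chooses a
response from its randomness and the past and current query answers. -/
structure Steward (n k d m : ℕ) where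
  q : (Fin m → Bool) → List (Fin d → ℝ) → (Fin n → Bool)
  r : (Fin m → Bool) → List (Fin d → ℝ) → (Fin d → ℝ) → (Fin d → ℝ)

/-- The interaction `O ↔ S(Z)` for `i` rounds: the list of triples `(Y_i, W_i, μ_i)`. -/
noncomputable def run {n k d m : ℕ} {ε δ : ℝ} (O : Owner n k d ε δ) (S : Steward n k d m)
    (Z : Fin m → Bool) : ℕ → List ((Fin d → ℝ) × (Fin d → ℝ) × (Fin d → ℝ))
  | 0 => []
  | i + 1 =>
    let h := run O S Z i
    let fμ := O.act (h.map fun p => p.1)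
    let X := S.q Z (h.map fun p => p.2.1)
    let W := fμ.1 X
    h ++ [(S.r Z (h.map fun p => p.2.1) W, W, fμ.2)]

/-- `S` is a one-query `(ε',δ')`-steward for `k` adaptively chosen
`(ε,δ)`-concentrated functions `{0,1}^n → ℝ^d`. -/
def IsSteward (n k d m : ℕ) (ε δ ε' δ' : ℝ) (S : Steward n k d m) : Prop :=
  ∀ O : Owner n k d ε δ,
    pr (fun Z : Fin m → Bool =>
      ∃ p ∈ run O S Z k, ∃ j : Fin d, |p.1 j - p.2.2 j| > ε') ≤ δ'

/-- Rounds `x` to the midpoint of the half-open interval `[L·m, L·(m+1))` containing it. -/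
noncomputable def roundMid (L x : ℝ) : ℝ := L * ⌊x / L⌋ + L / 2

/-- The least `Δ ∈ {1,…,d₀+1}` such that, for every coordinate `j` in block `t`
(the blocks being the consecutive runs of `d₀` coordinates), the interval
`[W_j + (2Δ−1)ε, W_j + (2Δ+1)ε]` is contained in a single half-open interval
`[2ε(d₀+1)·m, 2ε(d₀+1)·(m+1))`. -/
noncomputable def shiftBlock (d d₀ : ℕ) (ε : ℝ) (W : Fin d → ℝ) (t : ℕ) : ℕ :=
  sInf {Δ : ℕ | 1 ≤ Δ ∧ Δ ≤ d₀ + 1 ∧ ∀ j : Fin d, (j : ℕ) / d₀ = t →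
    ∃ m : ℤ, 2 * ε * (d₀ + 1) * m ≤ W j + (2 * Δ - 1) * ε ∧
      W j + (2 * Δ + 1) * ε < 2 * ε * (d₀ + 1) * (m + 1)}

/-- The interaction `O ↔ S₀(X_1,…,X_k)` with the (generalized) shifting-and-rounding
steward `S₀` (block size `d₀`): the list of pairs `(Y_i, μ_i)`. In round `i`,
`S₀` queries `f_i` at the fresh random point `X_i`, shifts each block of `d₀`
coordinates of `W_i = f_i(X_i)` by `2·Δ_{it}·ε`, and rounds each coordinate to the
midpoint of the length-`2ε(d₀+1)` half-open interval containing it. -/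
noncomputable def runS0 (n d d₀ k : ℕ) (ε δ : ℝ) (O : Owner n k d ε δ)
    (Xs : List (Fin n → Bool)) : List ((Fin d → ℝ) × (Fin d → ℝ)) :=
  Xs.foldl (fun h X =>
    let fμ := O.act (h.map Prod.fst)
    let W := fμ.1 X
    h ++ [(fun j : Fin d =>
      roundMid (2 * ε * (d₀ + 1)) (W j + 2 * (shiftBlock d d₀ ε W ((j : ℕ) / d₀)) * ε),
      fμ.2)]) []

/-- The output string of a `(k,n,Σ)` block decision tree, given as the family of
node functions `v_w` indexed by strings `w`, on input the list `Xs` of blocks: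
`σ_i = v_{(σ_1,…,σ_{i-1})}(X_i)`. -/
def treeOutList {A I : Type*} (v : List A → I → A) (Xs : List I) : List A :=
  Xs.foldl (fun w X => w ++ [v w X]) []

/-- `Gen` is a `γ`-PRG for `(k,n,A)` block decision trees: for every tree, the total
variation distance between the output distribution on pseudorandom inputs and on
truly random inputs is at most `γ`. -/
def IsBDTPRG (n k s : ℕ) (A : Type*) [Fintype A] (γ : ℝ)
    (Gen : (Fin s → Bool) → Fin k → (Fin n → Bool)) : Prop :=
  ∀ v : List A → (Fin n → Bool) → A,
    (1 / 2) * ∑ σ : Fin k → A,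
      |pr (fun x : Fin s → Bool => treeOutList v (List.ofFn (Gen x)) = List.ofFn σ)
        - pr (fun X : Fin k → (Fin n → Bool) => treeOutList v (List.ofFn X) = List.ofFn σ)|
      ≤ γ


/-! At a node whose history of responses is `Y_1, …, Y_{i-1}`, the tree outputs `⊥` exactly
when `f_i(X_i)` is more than `ε` away from `μ_i`, which has probability at most `δ` by
concentration; otherwise it outputs the shift `Δ_i`. Off `⊥`, the window
`[W_{ij} + (2Δ_i - 1)ε, W_{ij} + (2Δ_i + 1)ε]` lies in one rounding cell and contains
`μ_{ij} + 2Δ_iε`, so `Y_i` is the midpoint of the cell containing `μ_i + 2Δ_iε`. Hence the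
symbols alone determine the responses (so the tree can follow the interaction), and
`‖Y_i - μ_i‖_∞ ≤ (d+1)ε + 2(d+1)ε`. A good shift exists because, for each coordinate, the
`d+1` consecutive windows of length `2ε` cover one cell length, so at most one of them
straddles a cell boundary. -/

section Rounding

variable {L x : ℝ}

lemma roundMid_eq_of_mem_cell (hL : 0 < L) {m : ℤ} (h₁ : L * m ≤ x) (h₂ : x < L * (m + 1)) :
    roundMid L x = L * m + L / 2 := by
  have hfloor : ⌊x / L⌋ = m := by
    rw [Int.floor_eq_iff, le_div_iff₀ hL, div_lt_iff₀ hL]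
    constructor <;> linarith
  rw [roundMid, hfloor]

lemma mem_cell_floor (hL : 0 < L) : L * ⌊x / L⌋ ≤ x ∧ x < L * (⌊x / L⌋ + 1) := by
  have h₁ := Int.floor_le (x / L)
  have h₂ := Int.lt_floor_add_one (x / L)
  rw [le_div_iff₀ hL] at h₁
  rw [div_lt_iff₀ hL] at h₂
  constructor <;> linarith

lemma abs_roundMid_sub_le (hL : 0 < L) : |roundMid L x - x| ≤ L / 2 := by
  obtain ⟨h₁, h₂⟩ := mem_cell_floor (x := x) hL
  rw [roundMid_eq_of_mem_cell hL h₁ h₂, abs_le]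
  constructor <;> linarith

end Rounding

/-- `shiftBlock` picks the least `Δ` for which this holds in every coordinate of the block. -/
def WindowInCell (L ε x : ℝ) (Δ : ℕ) : Prop :=
  ∃ m : ℤ, L * m ≤ x + (2 * Δ - 1) * ε ∧ x + (2 * Δ + 1) * ε < L * (m + 1)

section Windows

variable {L ε x : ℝ}

lemma exists_boundary_mem_window_of_not_windowInCell (hL : 0 < L) {Δ : ℕ}
    (h : ¬ WindowInCell L ε x Δ) :
    ∃ m : ℤ, x + (2 * Δ - 1) * ε < L * m ∧ L * m ≤ x + (2 * Δ + 1) * ε := by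
  obtain ⟨h₁, h₂⟩ := mem_cell_floor (x := x + (2 * Δ - 1) * ε) hL
  refine ⟨⌊(x + (2 * Δ - 1) * ε) / L⌋ + 1, by push_cast; linarith, ?_⟩
  by_contra! hlt
  exact h ⟨_, h₁, by push_cast at hlt; linarith⟩

/-- Two windows among `N` consecutive ones cannot both straddle a cell boundary, since
together they span less than one cell. -/
lemma windowInCell_of_not_windowInCell_of_lt (hε : 0 < ε) {N : ℕ} (hL : 2 * ε * N ≤ L)
    {Δ₁ Δ₂ : ℕ} (hΔ₁ : 1 ≤ Δ₁) (hΔ₂ : Δ₂ ≤ N) (hlt : Δ₁ < Δ₂)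
    (h₁ : ¬ WindowInCell L ε x Δ₁) : WindowInCell L ε x Δ₂ := by
  by_contra h₂
  have hN : ((Δ₂ + 1 : ℕ) : ℝ) ≤ ((N + Δ₁ : ℕ) : ℝ) := by exact_mod_cast (by omega)
  have hN₁ : (1 : ℝ) ≤ N := by exact_mod_cast (by omega : 1 ≤ N)
  push_cast at hN
  have hL₀ : 0 < L := by nlinarith
  have hgap : (Δ₁ : ℝ) + 1 ≤ Δ₂ := by exact_mod_cast hlt
  obtain ⟨m₁, hm₁, hm₁'⟩ := exists_boundary_mem_window_of_not_windowInCell hL₀ h₁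
  obtain ⟨m₂, hm₂, hm₂'⟩ := exists_boundary_mem_window_of_not_windowInCell hL₀ h₂
  have hm : m₁ + 1 ≤ m₂ := by
    have : L * m₁ < L * m₂ := by nlinarith
    exact_mod_cast (lt_of_mul_lt_mul_left this hL₀.le)
  have : L * (m₁ + 1) ≤ L * m₂ := mul_le_mul_of_nonneg_left (by exact_mod_cast hm) hL₀.le
  nlinarith

lemma card_filter_not_windowInCell_le_one (hε : 0 < ε) {N : ℕ} (hL : 2 * ε * N ≤ L) :
    ((Finset.Icc 1 N).filter fun Δ => ¬ WindowInCell L ε x Δ).card ≤ 1 := by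
  simp only [Finset.card_le_one, Finset.mem_filter, Finset.mem_Icc]
  rintro Δ₁ ⟨⟨hΔ₁, hΔ₁'⟩, h₁⟩ Δ₂ ⟨⟨hΔ₂, hΔ₂'⟩, h₂⟩
  by_contra hne
  rcases Nat.lt_or_gt_of_ne hne with hlt | hlt
  · exact h₂ (windowInCell_of_not_windowInCell_of_lt hε hL hΔ₁ hΔ₂' hlt h₁)
  · exact h₁ (windowInCell_of_not_windowInCell_of_lt hε hL hΔ₂ hΔ₁' hlt h₂)

end Windows

lemma exists_windowInCell_forall {d : ℕ} {ε : ℝ} (hε : 0 < ε) (W : Fin d → ℝ) :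
    ∃ Δ, 1 ≤ Δ ∧ Δ ≤ d + 1 ∧ ∀ j, WindowInCell (2 * ε * (d + 1)) ε (W j) Δ := by
  set bad := Finset.univ.biUnion fun j =>
    (Finset.Icc 1 (d + 1)).filter fun Δ => ¬ WindowInCell (2 * ε * (d + 1)) ε (W j) Δ
  have hbad : bad.card < (Finset.Icc 1 (d + 1)).card := by
    calc bad.card ≤ ∑ _j : Fin d, 1 :=
          Finset.card_biUnion_le.trans (Finset.sum_le_sum fun j _ =>
            card_filter_not_windowInCell_le_one hε (by push_cast; rfl))
      _ < (Finset.Icc 1 (d + 1)).card := by simp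
  obtain ⟨Δ, hΔ, hΔbad⟩ := Finset.exists_mem_notMem_of_card_lt_card hbad
  rw [Finset.mem_Icc] at hΔ
  refine ⟨Δ, hΔ.1, hΔ.2, fun j => ?_⟩
  by_contra h
  exact hΔbad (Finset.mem_biUnion.2 ⟨j, Finset.mem_univ j, Finset.mem_filter.2 ⟨by simpa, h⟩⟩)

lemma shiftBlock_spec {d : ℕ} {ε : ℝ} (hε : 0 < ε) (W : Fin d → ℝ) :
    1 ≤ shiftBlock d d ε W 0 ∧ shiftBlock d d ε W 0 ≤ d + 1 ∧
      ∀ j, WindowInCell (2 * ε * (d + 1)) ε (W j) (shiftBlock d d ε W 0) := by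
  obtain ⟨Δ, hΔ⟩ := exists_windowInCell_forall hε W
  obtain ⟨h₁, h₂, h₃⟩ := Nat.sInf_mem (s := {Δ : ℕ | 1 ≤ Δ ∧ Δ ≤ d + 1 ∧ ∀ j : Fin d,
    (j : ℕ) / d = 0 → WindowInCell (2 * ε * (d + 1)) ε (W j) Δ})
    ⟨Δ, hΔ.1, hΔ.2.1, fun j _ => hΔ.2.2 j⟩
  exact ⟨h₁, h₂, fun j => h₃ j (Nat.div_eq_of_lt j.isLt)⟩

section Tree

variable {n k d : ℕ} {ε δ : ℝ}

noncomputable def s0Response (ε : ℝ) (W : Fin d → ℝ) : Fin d → ℝ := fun j =>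
  roundMid (2 * ε * (d + 1)) (W j + 2 * (shiftBlock d d ε W ((j : ℕ) / d)) * ε)

lemma runS0_append_singleton (O : Owner n k d ε δ) (Xs : List (Fin n → Bool))
    (X : Fin n → Bool) :
    runS0 n d d k ε δ O (Xs ++ [X]) = runS0 n d d k ε δ O Xs ++
      [(s0Response ε ((O.act ((runS0 n d d k ε δ O Xs).map Prod.fst)).1 X),
        (O.act ((runS0 n d d k ε δ O Xs).map Prod.fst)).2)] := by
  simp only [runS0, List.foldl_append, List.foldl_cons, List.foldl_nil]
  rfl

lemma treeOutList_append_singleton {A I : Type*} (v : List A → I → A) (Xs : List I) (X : I) :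
    treeOutList v (Xs ++ [X]) = treeOutList v Xs ++ [v (treeOutList v Xs) X] := by
  simp only [treeOutList, List.foldl_append, List.foldl_cons, List.foldl_nil]

/-- The symbol `some Δ` stands for the shift `Δ + 1 ∈ {1, …, d + 1}`; the value at `⊥` is
never used. -/
noncomputable def decodeResponse (ε : ℝ) (μ : Fin d → ℝ) : Option (Fin (d + 1)) → Fin d → ℝ
  | none => μ
  | some Δ => fun j => roundMid (2 * ε * (d + 1)) (μ j + 2 * ((Δ + 1 : ℕ) : ℝ) * ε)

noncomputable def decodeHistory (O : Owner n k d ε δ) (w : List (Option (Fin (d + 1)))) :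
    List (Fin d → ℝ) :=
  w.foldl (fun ys σ => ys ++ [decodeResponse ε (O.act ys).2 σ]) []

lemma decodeHistory_append_singleton (O : Owner n k d ε δ) (w : List (Option (Fin (d + 1))))
    (σ : Option (Fin (d + 1))) :
    decodeHistory O (w ++ [σ]) =
      decodeHistory O w ++ [decodeResponse ε (O.act (decodeHistory O w)).2 σ] := by
  simp only [decodeHistory, List.foldl_append, List.foldl_cons, List.foldl_nil]

lemma length_decodeHistory (O : Owner n k d ε δ) (w : List (Option (Fin (d + 1)))) :
    (decodeHistory O w).length = w.length := by
  induction w using List.reverseRecOn with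
  | nil => rfl
  | append_singleton w σ ih => simp [decodeHistory_append_singleton, ih]

noncomputable def shiftSymbol (d : ℕ) (ε : ℝ) (W : Fin d → ℝ) : Fin (d + 1) :=
  Fin.ofNat (d + 1) (shiftBlock d d ε W 0 - 1)

lemma decodeResponse_shiftSymbol (hε : 0 < ε) {W μ : Fin d → ℝ}
    (hWμ : ∀ j, |W j - μ j| ≤ ε) :
    decodeResponse ε μ (some (shiftSymbol d ε W)) = s0Response ε W := by
  obtain ⟨h₁, h₂, hcell⟩ := shiftBlock_spec hε W
  have hsymbol : (shiftSymbol d ε W : ℕ) + 1 = shiftBlock d d ε W 0 := by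
    rw [shiftSymbol, Fin.val_ofNat, Nat.mod_eq_of_lt (by omega)]
    omega
  have hL : 0 < 2 * ε * (d + 1) := by positivity
  funext j
  obtain ⟨m, hm₁, hm₂⟩ := hcell j
  obtain ⟨hj₁, hj₂⟩ := abs_le.1 (hWμ j)
  simp only [decodeResponse, s0Response, hsymbol, Nat.div_eq_of_lt j.isLt]
  rw [roundMid_eq_of_mem_cell hL (m := m) (by linarith) (by linarith),
    roundMid_eq_of_mem_cell hL (m := m) (by linarith) (by linarith)]

lemma abs_decodeResponse_some_sub_le (hε : 0 < ε) (μ : Fin d → ℝ) (Δ : Fin (d + 1))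
    (j : Fin d) :
    |decodeResponse ε μ (some Δ) j - μ j| ≤ (3 * d + 3) * ε := by
  have hL : 0 < 2 * ε * (d + 1) := by positivity
  have hΔ : ((Δ + 1 : ℕ) : ℝ) ≤ d + 1 := by exact_mod_cast Δ.isLt
  have hshift : 2 * ((Δ + 1 : ℕ) : ℝ) * ε ≤ 2 * (d + 1) * ε := by gcongr
  obtain ⟨h₁, h₂⟩ := abs_le.1 (abs_roundMid_sub_le (x := μ j + 2 * ((Δ + 1 : ℕ) : ℝ) * ε) hL)
  simp only [decodeResponse]
  rw [abs_le]
  constructor <;> nlinarith [hε]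

noncomputable def certTree (O : Owner n k d ε δ) (w : List (Option (Fin (d + 1))))
    (X : Fin n → Bool) : Option (Fin (d + 1)) :=
  if ∃ j, |(O.act (decodeHistory O w)).1 X j - (O.act (decodeHistory O w)).2 j| > ε then none
  else some (shiftSymbol d ε ((O.act (decodeHistory O w)).1 X))

lemma certTree_eq_none_iff (O : Owner n k d ε δ) (w : List (Option (Fin (d + 1))))
    (X : Fin n → Bool) :
    certTree O w X = none ↔
      ∃ j, |(O.act (decodeHistory O w)).1 X j - (O.act (decodeHistory O w)).2 j| > ε := by
  unfold certTree
  split_ifs with h <;> simp [h]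

lemma certTree_eq_some (O : Owner n k d ε δ) {w : List (Option (Fin (d + 1)))}
    {X : Fin n → Bool} (h : certTree O w X ≠ none) :
    certTree O w X = some (shiftSymbol d ε ((O.act (decodeHistory O w)).1 X)) := by
  unfold certTree at h ⊢
  split_ifs at h ⊢
  · exact absurd rfl h
  · rfl

lemma certTree_simulates_runS0 (hε : 0 < ε) (O : Owner n k d ε δ) (Xs : List (Fin n → Bool))
    (hpath : ∀ σ ∈ treeOutList (certTree O) Xs, σ ≠ none) :
    decodeHistory O (treeOutList (certTree O) Xs) = (runS0 n d d k ε δ O Xs).map Prod.fst ∧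
      ∀ p ∈ runS0 n d d k ε δ O Xs, ∀ j, |p.1 j - p.2 j| ≤ (3 * d + 3) * ε := by
  induction Xs using List.reverseRecOn with
  | nil => simp [treeOutList, runS0, decodeHistory]
  | append_singleton Xs X ih =>
    rw [treeOutList_append_singleton] at hpath ⊢
    set w := treeOutList (certTree O) Xs
    obtain ⟨hdecode, hclose⟩ := ih fun σ hσ => hpath σ (List.mem_append_left _ hσ)
    have hnode : certTree O w X ≠ none :=
      hpath _ (List.mem_append_right _ (List.mem_singleton_self _))
    have hnear :
        ∀ j, |(O.act (decodeHistory O w)).1 X j - (O.act (decodeHistory O w)).2 j| ≤ ε := by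
      simpa [certTree_eq_none_iff] using hnode
    have hresponse := decodeResponse_shiftSymbol hε hnear
    rw [hdecode] at hresponse
    rw [runS0_append_singleton, decodeHistory_append_singleton, certTree_eq_some O hnode, hdecode,
      hresponse]
    refine ⟨by simp, fun p hp j => ?_⟩
    rcases List.mem_append.1 hp with hp | hp
    · exact hclose p hp j
    · rw [List.mem_singleton.1 hp, ← hresponse]
      exact abs_decodeResponse_some_sub_le hε _ _ j

end Tree

theorem certification_tree (n k d : ℕ)
    (ε δ : ℝ) (hε : 0 < ε)
    (O : Owner n k d ε δ) :
    ∃ v : List (Option (Fin (d + 1))) → (Fin n → Bool) → Option (Fin (d + 1)),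
      (∀ w : List (Option (Fin (d + 1))), w.length < k →
        pr (fun X : Fin n → Bool => v w X = none) ≤ δ) ∧
      (∀ Xs : List (Fin n → Bool), Xs.length = k →
        (∀ σ ∈ treeOutList v Xs, σ ≠ none) →
        ∀ p ∈ runS0 n d d k ε δ O Xs, ∀ j : Fin d,
          |p.1 j - p.2 j| ≤ (3 * (d : ℝ) + 5) * ε) := by
  refine ⟨certTree O, fun w hw => ?_, fun Xs _ hpath p hp j => ?_⟩
  · simp only [certTree_eq_none_iff]
    exact O.conc _ ((length_decodeHistory O w).trans_lt hw)
  · have := (certTree_simulates_runS0 hε O Xs hpath).2 p hp j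
    linarith
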